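/- arXiv:2101.12733 — 7 statements merged into one kernel-verified Lean document; each statement's English description precedes it below -/
import Mathlib

section
/- For every two finite simple graphs G and H, G is isomorphic to H if and only if for every finite simple graph F, the number of graph homomorphisms from F to G equals the number of graph homomorphisms from F to H. -/
open SimpleGraph

namespace LovaszAux

open Function

noncomputable section
open Classical

variable {V W U : Type*}

instance instFiniteHom [Finite V] [Finite W] (A : SimpleGraph V) (B : SimpleGraph W) :
    Finite (A →g B) :=
  Finite.of_injective (fun f => (f : V → W)) DFunLike.coe_injective

instance instFiniteSetoid [Finite V] : Finite (Setoid V) :=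
  Finite.of_injective (fun s : Setoid V => s.r)
    (fun _ _ h => Setoid.ext fun a b => iff_of_eq (congrFun₂ h a b))

noncomputable instance instFintypeSetoid [Finite V] : Fintype (Setoid V) :=
  Fintype.ofFinite _

noncomputable instance instFintypeQuotient [Finite V] (s : Setoid V) : Fintype (Quotient s) :=
  Fintype.ofFinite _

/-- Composing with an isomorphism of targets gives an equivalence of hom sets. -/
def homEquivOfTargetIso (A : SimpleGraph V) {B : SimpleGraph W} {C : SimpleGraph U}
    (e : B ≃g C) : (A →g B) ≃ (A →g C) where
  toFun f := e.toHom.comp f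
  invFun f := e.symm.toHom.comp f
  left_inv f := by ext v; simp
  right_inv f := by ext v; simp

/-- Composing with an isomorphism of sources gives an equivalence of injective-hom sets. -/
def injEquivOfSourceIso {A : SimpleGraph V} {A' : SimpleGraph W} (e : A ≃g A')
    (B : SimpleGraph U) :
    {f : A →g B // Injective ⇑f} ≃ {f : A' →g B // Injective ⇑f} where
  toFun f := ⟨f.1.comp e.symm.toHom, f.2.comp e.symm.injective⟩
  invFun f := ⟨f.1.comp e.toHom, f.2.comp e.injective⟩
  left_inv f := by apply Subtype.ext; ext v; simp
  right_inv f := by apply Subtype.ext; ext v; simp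

/-- The quotient graph of `F` by a setoid `s`. -/
def quotGraph (F : SimpleGraph V) (s : Setoid V) : SimpleGraph (Quotient s) where
  Adj x y := x ≠ y ∧ ∃ a b, F.Adj a b ∧ Quotient.mk s a = x ∧ Quotient.mk s b = y
  symm := ⟨by
    rintro x y ⟨h, a, b, hab, rfl, rfl⟩
    exact ⟨h.symm, b, a, hab.symm, rfl, rfl⟩⟩
  loopless := ⟨fun x h => h.1 rfl⟩

/-- Homomorphisms with kernel `s` correspond to injective homomorphisms from the quotient,
when `s` is compatible with `F` (does not relate adjacent vertices). -/
def fiberEquiv (F : SimpleGraph V) (X : SimpleGraph W) (s : Setoid V)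
    (hs : ∀ a b, F.Adj a b → ¬ s.r a b) :
    {f : F →g X // Setoid.ker ⇑f = s} ≃ {g : quotGraph F s →g X // Injective ⇑g} where
  toFun := fun ⟨f, hf⟩ =>
    ⟨⟨Quotient.lift ⇑f (fun a b hab => by rw [← hf] at hab; exact hab), by
        rintro x y ⟨-, a, b, hab, rfl, rfl⟩
        exact f.map_rel hab⟩, by
      rintro ⟨a⟩ ⟨b⟩ (h : f a = f b)
      exact Quotient.sound (by rw [← hf]; exact h)⟩
  invFun := fun ⟨g, hg⟩ =>
    ⟨g.comp ⟨Quotient.mk s, fun {a b} hab =>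
        ⟨fun h => hs a b hab (Quotient.exact h), a, b, hab, rfl, rfl⟩⟩, by
      refine Setoid.ext fun a b => ⟨fun h => Quotient.exact (hg h), fun h => ?_⟩
      exact congrArg g (Quotient.sound h)⟩
  left_inv := fun ⟨f, hf⟩ => Subtype.ext (by ext v; rfl)
  right_inv := fun ⟨g, hg⟩ => Subtype.ext (by ext ⟨v⟩; rfl)

theorem fiber_isEmpty (F : SimpleGraph V) (X : SimpleGraph W) (s : Setoid V)
    (hs : ¬ ∀ a b, F.Adj a b → ¬ s.r a b) :
    IsEmpty {f : F →g X // Setoid.ker ⇑f = s} := by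
  constructor
  rintro ⟨f, hf⟩
  push_neg at hs
  obtain ⟨a, b, hab, hr⟩ := hs
  have h1 : f a = f b := by
    have : Setoid.ker ⇑f a b := by rw [hf]; exact hr
    exact this
  have h2 := f.map_rel hab
  rw [h1] at h2
  exact X.irrefl h2

theorem nat_card_sigma {ι : Type*} [Fintype ι] (f : ι → Type*) [∀ i, Finite (f i)] :
    Nat.card (Σ i, f i) = ∑ i, Nat.card (f i) := by
  have : ∀ i, Fintype (f i) := fun i => Fintype.ofFinite _
  simp [Nat.card_eq_fintype_card, Fintype.card_sigma]

theorem hom_card_eq_sum {k n : ℕ} (F : SimpleGraph (Fin k)) (X : SimpleGraph (Fin n)) :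
    Nat.card (F →g X)
      = ∑ s : Setoid (Fin k), Nat.card {f : F →g X // Setoid.ker ⇑f = s} := by
  rw [Nat.card_congr (Equiv.sigmaFiberEquiv (fun f : F →g X => Setoid.ker ⇑f)).symm,
    nat_card_sigma]

theorem quotient_card_lt {k : ℕ} (s : Setoid (Fin k)) (hs : s ≠ ⊥) :
    Fintype.card (Quotient s) < k := by
  obtain ⟨a, b, hne, hr⟩ : ∃ a b, a ≠ b ∧ s.r a b := by
    by_contra h
    push_neg at h
    apply hs
    refine Setoid.ext fun a b => ⟨fun hab => ?_, fun hab => ?_⟩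
    · by_contra hne
      exact (h a b hne) hab
    · have : a = b := hab
      exact this ▸ s.refl a
  have hlt := Fintype.card_lt_of_surjective_not_injective (Quotient.mk s)
    (Quotient.mk_surjective) (fun hinj => hne (hinj (Quotient.sound hr)))
  simpa using hlt

/-- The key induction: equal hom counts imply equal injective-hom counts. -/
theorem inj_counts {m n : ℕ} (G : SimpleGraph (Fin m)) (H : SimpleGraph (Fin n))
    (hyp : ∀ (k : ℕ) (F : SimpleGraph (Fin k)), Nat.card (F →g G) = Nat.card (F →g H)) :
    ∀ (k : ℕ) (F : SimpleGraph (Fin k)),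
      Nat.card {f : F →g G // Injective ⇑f} = Nat.card {f : F →g H // Injective ⇑f} := by
  intro k
  induction k using Nat.strong_induction_on with
  | _ k IH =>
    intro F
    have key : ∀ s : Setoid (Fin k), s ≠ ⊥ →
        Nat.card {f : F →g G // Setoid.ker ⇑f = s}
          = Nat.card {f : F →g H // Setoid.ker ⇑f = s} := by
      intro s hsne
      by_cases hc : ∀ a b, F.Adj a b → ¬ s.r a b
      · set j := Fintype.card (Quotient s) with hj
        have hlt : j < k := quotient_card_lt s hsne
        let e : Quotient s ≃ Fin j := Fintype.equivFin _
        let iso := SimpleGraph.Iso.comap e.symm (quotGraph F s)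
        calc Nat.card {f : F →g G // Setoid.ker ⇑f = s}
            = Nat.card {g : quotGraph F s →g G // Injective ⇑g} :=
              Nat.card_congr (fiberEquiv F G s hc)
          _ = Nat.card {g : (quotGraph F s).comap ⇑e.symm.toEmbedding →g G // Injective ⇑g} :=
              Nat.card_congr (injEquivOfSourceIso iso.symm G)
          _ = Nat.card {g : (quotGraph F s).comap ⇑e.symm.toEmbedding →g H // Injective ⇑g} :=
              IH j hlt _
          _ = Nat.card {g : quotGraph F s →g H // Injective ⇑g} :=
              Nat.card_congr (injEquivOfSourceIso iso H)
          _ = Nat.card {f : F →g H // Setoid.ker ⇑f = s} :=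
              (Nat.card_congr (fiberEquiv F H s hc)).symm
      · haveI := fiber_isEmpty F G s hc
        haveI := fiber_isEmpty F H s hc
        simp [Nat.card_of_isEmpty]
    have tot : (∑ s : Setoid (Fin k), Nat.card {f : F →g G // Setoid.ker ⇑f = s})
        = ∑ s : Setoid (Fin k), Nat.card {f : F →g H // Setoid.ker ⇑f = s} := by
      rw [← hom_card_eq_sum, ← hom_card_eq_sum, hyp k F]
    rw [← Finset.add_sum_erase _ _ (Finset.mem_univ (⊥ : Setoid (Fin k))),
      ← Finset.add_sum_erase _ _ (Finset.mem_univ (⊥ : Setoid (Fin k)))] at tot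
    have hrest : (∑ s ∈ Finset.univ.erase (⊥ : Setoid (Fin k)),
          Nat.card {f : F →g G // Setoid.ker ⇑f = s})
        = ∑ s ∈ Finset.univ.erase (⊥ : Setoid (Fin k)),
          Nat.card {f : F →g H // Setoid.ker ⇑f = s} :=
      Finset.sum_congr rfl fun s hsmem => key s (Finset.ne_of_mem_erase hsmem)
    rw [hrest] at tot
    have hbot := Nat.add_right_cancel tot
    have eG : {f : F →g G // Setoid.ker ⇑f = ⊥} ≃ {f : F →g G // Injective ⇑f} :=
      Equiv.subtypeEquivRight fun f => (Setoid.injective_iff_ker_bot ⇑f).symm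
    have eH : {f : F →g H // Setoid.ker ⇑f = ⊥} ≃ {f : F →g H // Injective ⇑f} :=
      Equiv.subtypeEquivRight fun f => (Setoid.injective_iff_ker_bot ⇑f).symm
    rw [← Nat.card_congr eG, ← Nat.card_congr eH]
    exact hbot

end

end LovaszAux

open LovaszAux Function in
/-- **Lovász's theorem**: two finite simple graphs are isomorphic iff they have the same
left-homomorphism counts from every finite simple graph. -/
theorem lovasz_hom_counts {m n : ℕ} (G : SimpleGraph (Fin m)) (H : SimpleGraph (Fin n)) :
    Nonempty (G ≃g H) ↔
      ∀ (k : ℕ) (F : SimpleGraph (Fin k)), Nat.card (F →g G) = Nat.card (F →g H) := by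
  constructor
  · rintro ⟨e⟩ k F
    exact Nat.card_congr (homEquivOfTargetIso F e)
  · intro hyp
    have inj := inj_counts G H hyp
    -- injective hom G → H
    have hGpos : 0 < Nat.card {f : G →g H // Injective ⇑f} := by
      rw [← inj m G]
      haveI : Nonempty {f : G →g G // Injective ⇑f} := ⟨⟨Hom.id, fun _ _ h => h⟩⟩
      exact Nat.card_pos
    obtain ⟨⟨f, hf⟩⟩ := (Nat.card_pos_iff.mp hGpos).1
    -- injective hom H → G
    have hHpos : 0 < Nat.card {f : H →g G // Injective ⇑f} := by
      rw [inj n H]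
      haveI : Nonempty {f : H →g H // Injective ⇑f} := ⟨⟨Hom.id, fun _ _ h => h⟩⟩
      exact Nat.card_pos
    obtain ⟨⟨g, hg⟩⟩ := (Nat.card_pos_iff.mp hHpos).1
    -- m = n
    have hmn : m = n := by
      have h1 : m ≤ n := by simpa using Fintype.card_le_of_injective ⇑f hf
      have h2 : n ≤ m := by simpa using Fintype.card_le_of_injective ⇑g hg
      exact le_antisymm h1 h2
    have hbij : Bijective ⇑f :=
      (Fintype.bijective_iff_injective_and_card ⇑f).mpr ⟨hf, by simp [hmn]⟩
    -- edge sets have equal size, so f maps edges onto edges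
    classical
    haveI : Fintype G.edgeSet := Fintype.ofFinite _
    haveI : Fintype H.edgeSet := Fintype.ofFinite _
    have hEcard : Fintype.card G.edgeSet = Fintype.card H.edgeSet :=
      le_antisymm (Fintype.card_le_of_injective _ (Hom.mapEdgeSet.injective f hf))
        (Fintype.card_le_of_injective _ (Hom.mapEdgeSet.injective g hg))
    have hsurj : Surjective f.mapEdgeSet :=
      ((Fintype.bijective_iff_injective_and_card f.mapEdgeSet).mpr
        ⟨Hom.mapEdgeSet.injective f hf, hEcard⟩).2
    refine ⟨⟨Equiv.ofBijective ⇑f hbij, ?_⟩⟩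
    intro a b
    constructor
    · intro h
      obtain ⟨⟨e, he⟩, hmap⟩ := hsurj ⟨s(f a, f b), h⟩
      have : Sym2.map ⇑f e = s(f a, f b) := congrArg Subtype.val hmap
      have he2 : e = s(a, b) := Sym2.map.injective hf (by rw [this]; rfl)
      rw [he2] at he
      exact he
    · intro h
      exact f.map_rel h
end

section
/- For every two finite simple graphs G and H, G is isomorphic to H if and only if for every finite simple graph F, the number of graph homomorphisms from G to F equals the number of graph homomorphisms from H to F. -/
open SimpleGraph

section Aux

variable {m n k : ℕ}

noncomputable instance homFinite {V W : Type*} [Finite V] [Finite W]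
    (G : SimpleGraph V) (F : SimpleGraph W) : Finite (G →g F) :=
  Finite.of_injective (fun f => (f : V → W)) DFunLike.coe_injective

private lemma mycard_sigma {ι : Type*} [Fintype ι] (β : ι → Type*) [∀ i, Finite (β i)] :
    Nat.card (Σ i, β i) = ∑ i, Nat.card (β i) := by
  have : ∀ i, Fintype (β i) := fun i => Fintype.ofFinite (β i)
  simp [Nat.card_eq_fintype_card]

/-- homs with range inside `S` are in bijection with homs into the induced graph on `S`. -/
noncomputable def homRestrictEquiv (G : SimpleGraph (Fin m)) (F : SimpleGraph (Fin k))
    (S : Finset (Fin k)) :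
    {f : G →g F // ∀ v, f v ∈ S} ≃
      (G →g F.comap (fun i : Fin S.card => ((((Fintype.equivFinOfCardEq
        (Fintype.card_coe S)).symm i) : S) : Fin k))) where
  toFun f := ⟨fun v => (Fintype.equivFinOfCardEq (Fintype.card_coe S)) ⟨f.1 v, f.2 v⟩,
    by
      intro u v h
      show F.Adj _ _
      simpa using f.1.map_adj h⟩
  invFun g := ⟨⟨fun v => (((Fintype.equivFinOfCardEq (Fintype.card_coe S)).symm (g v)) : S),
    fun h => g.map_adj h⟩,
    fun v => (((Fintype.equivFinOfCardEq (Fintype.card_coe S)).symm (g v)) : S).2⟩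
  left_inv f := by
    refine Subtype.ext (DFunLike.ext _ _ fun v => ?_)
    exact congrArg Subtype.val
      (Equiv.symm_apply_apply (Fintype.equivFinOfCardEq (Fintype.card_coe S)) ⟨f.1 v, f.2 v⟩)
  right_inv g := by
    refine DFunLike.ext _ _ fun v => ?_
    exact (congrArg (Fintype.equivFinOfCardEq (Fintype.card_coe S))
        (Subtype.coe_eta _ _)).trans
      (Equiv.apply_symm_apply (Fintype.equivFinOfCardEq (Fintype.card_coe S)) (g v))

private lemma range_eq_decomp (G : SimpleGraph (Fin m)) (F : SimpleGraph (Fin k))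
    (S : Finset (Fin k)) :
    Nat.card {f : G →g F // ∀ v, f v ∈ S} =
      ∑ T ∈ S.powerset, Nat.card {f : G →g F // Finset.image (⇑f) Finset.univ = T} := by
  classical
  have e : {f : G →g F // ∀ v, f v ∈ S} ≃
      Σ T : {T : Finset (Fin k) // T ∈ S.powerset},
        {f : G →g F // Finset.image (⇑f) Finset.univ = T.1} :=
    { toFun := fun f => ⟨⟨Finset.image (⇑f.1) Finset.univ, by
        rw [Finset.mem_powerset, Finset.image_subset_iff]
        exact fun v _ => f.2 v⟩, ⟨f.1, rfl⟩⟩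
      invFun := fun p => ⟨p.2.1, by
        intro v
        have hT := p.1.2
        rw [Finset.mem_powerset] at hT
        have hv := Finset.mem_image_of_mem (⇑p.2.1) (Finset.mem_univ v)
        rw [p.2.2] at hv
        exact hT hv⟩
      left_inv := fun f => rfl
      right_inv := fun p => by
        rcases p with ⟨⟨T, hT⟩, ⟨f, hf⟩⟩
        dsimp only at hf
        subst hf
        rfl }
  rw [Nat.card_congr e, mycard_sigma]
  exact Finset.sum_coe_sort S.powerset
    (fun T => Nat.card {f : G →g F // Finset.image (⇑f) Finset.univ = T})

/-- the key induction: equality of hom counts implies equality of counts of homs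
with prescribed range. -/
private lemma surj_count_eq {m n : ℕ} (G : SimpleGraph (Fin m)) (H : SimpleGraph (Fin n))
    (hyp : ∀ (k : ℕ) (F : SimpleGraph (Fin k)), Nat.card (G →g F) = Nat.card (H →g F))
    (k : ℕ) (F : SimpleGraph (Fin k)) (S : Finset (Fin k)) :
    Nat.card {f : G →g F // Finset.image (⇑f) Finset.univ = S} =
      Nat.card {f : H →g F // Finset.image (⇑f) Finset.univ = S} := by
  classical
  induction S using Finset.strongInduction with
  | _ S ih =>
    have hN : Nat.card {f : G →g F // ∀ v, f v ∈ S} =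
        Nat.card {f : H →g F // ∀ v, f v ∈ S} := by
      rw [Nat.card_congr (homRestrictEquiv G F S), Nat.card_congr (homRestrictEquiv H F S)]
      exact hyp _ _
    rw [range_eq_decomp, range_eq_decomp] at hN
    have hSmem : S ∈ S.powerset := Finset.mem_powerset_self S
    rw [← Finset.add_sum_erase _ _ hSmem, ← Finset.add_sum_erase _ _ hSmem] at hN
    have hrest : ∑ T ∈ (S.powerset).erase S,
          Nat.card {f : G →g F // Finset.image (⇑f) Finset.univ = T} =
        ∑ T ∈ (S.powerset).erase S,
          Nat.card {f : H →g F // Finset.image (⇑f) Finset.univ = T} := by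
      apply Finset.sum_congr rfl
      intro T hT
      rw [Finset.mem_erase, Finset.mem_powerset] at hT
      exact ih T (lt_of_le_of_ne hT.2 hT.1)
    omega
  
private lemma exists_surj_hom {m n : ℕ} (G : SimpleGraph (Fin m)) (H : SimpleGraph (Fin n))
    (hyp : ∀ (k : ℕ) (F : SimpleGraph (Fin k)), Nat.card (G →g F) = Nat.card (H →g F)) :
    ∃ f : G →g H, Function.Surjective f := by
  classical
  have h := surj_count_eq G H hyp n H Finset.univ
  have hpos : 0 < Nat.card {f : H →g H // Finset.image (⇑f) Finset.univ = Finset.univ} := by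
    rw [Nat.card_pos_iff]
    refine ⟨⟨⟨SimpleGraph.Hom.id, ?_⟩⟩, Finite.of_injective (fun f => (f.1 : Fin n → Fin n))
      (fun a b hab => Subtype.ext (DFunLike.coe_injective hab))⟩
    simp [SimpleGraph.Hom.id]
  rw [← h, Nat.card_pos_iff] at hpos
  obtain ⟨⟨f, hf⟩⟩ := hpos.1
  refine ⟨f, fun y => ?_⟩
  have : y ∈ Finset.image (⇑f) Finset.univ := hf ▸ Finset.mem_univ y
  simpa using this

end Aux

/-- **Chaudhuri–Vardi theorem**: two finite simple graphs are isomorphic iff they have the same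
right-homomorphism counts into every finite simple graph. -/
theorem chaudhuri_vardi_hom_counts {m n : ℕ} (G : SimpleGraph (Fin m)) (H : SimpleGraph (Fin n)) :
    Nonempty (G ≃g H) ↔
      ∀ (k : ℕ) (F : SimpleGraph (Fin k)), Nat.card (G →g F) = Nat.card (H →g F) := by
  classical
  constructor
  · rintro ⟨e⟩ k F
    exact Nat.card_congr
      { toFun := fun f => f.comp e.symm.toHom
        invFun := fun f => f.comp e.toHom
        left_inv := fun f => by ext v; simp
        right_inv := fun f => by ext v; simp }
  · intro hyp
    obtain ⟨f, hf⟩ := exists_surj_hom G H hyp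
    obtain ⟨g, hg⟩ := exists_surj_hom H G
      (fun k F => (hyp k F).symm)
    -- vertex cardinalities agree
    have hnm : n ≤ m := by simpa using Fintype.card_le_of_surjective _ hf
    have hmn : m ≤ n := by simpa using Fintype.card_le_of_surjective _ hg
    have hcard : (Fintype.card (Fin m)) = Fintype.card (Fin n) := by simp; omega
    have hfbij : Function.Bijective f :=
      (Fintype.bijective_iff_surjective_and_card _).2 ⟨hf, hcard⟩
    have hgbij : Function.Bijective g :=
      (Fintype.bijective_iff_surjective_and_card _).2 ⟨hg, by simp; omega⟩
    -- edge counts agree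
    have hGH : Nat.card G.edgeSet ≤ Nat.card H.edgeSet :=
      Nat.card_le_card_of_injective _ (SimpleGraph.Hom.mapEdgeSet.injective f hfbij.1)
    have hHG : Nat.card H.edgeSet ≤ Nat.card G.edgeSet :=
      Nat.card_le_card_of_injective _ (SimpleGraph.Hom.mapEdgeSet.injective g hgbij.1)
    have hE : Nat.card G.edgeSet = Nat.card H.edgeSet := le_antisymm hGH hHG
    -- hence mapEdgeSet of f is surjective
    have : Fintype G.edgeSet := Fintype.ofFinite _
    have : Fintype H.edgeSet := Fintype.ofFinite _
    have hmapbij : Function.Bijective (f.mapEdgeSet) := by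
      rw [Fintype.bijective_iff_injective_and_card]
      refine ⟨SimpleGraph.Hom.mapEdgeSet.injective f hfbij.1, ?_⟩
      rwa [← Nat.card_eq_fintype_card, ← Nat.card_eq_fintype_card]
    -- build the isomorphism
    refine ⟨⟨Equiv.ofBijective f hfbij, @fun u v => ⟨fun h => ?_, fun h => f.map_adj h⟩⟩⟩
    have h' : H.Adj (f u) (f v) := h
    obtain ⟨⟨e, he⟩, hee⟩ := hmapbij.2 ⟨s(f u, f v), H.mem_edgeSet.2 h'⟩
    have hval : Sym2.map (⇑f) e = s(f u, f v) := Subtype.ext_iff.1 hee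
    induction e with
    | _ a b =>
      rw [Sym2.map_pair_eq, Sym2.eq_iff] at hval
      have hadj : G.Adj a b := G.mem_edgeSet.1 he
      rcases hval with ⟨ha, hb⟩ | ⟨ha, hb⟩
      · rwa [hfbij.1 ha, hfbij.1 hb] at hadj
      · rw [hfbij.1 ha, hfbij.1 hb] at hadj
        exact G.adj_symm hadj
end

section
/- Let 𝓕 be a non-empty class of finite simple graphs closed under isomorphism, and let Ext(𝓕) be the class of graphs E for which there exist graphs F₁, F₂ ∈ 𝓕 such that there is a surjective homomorphism from F₁ onto E and an injective homomorphism from E into F₂. If G and H are graphs belonging to 𝓕 and for every graph D ∈ Ext(𝓕) the number of homomorphisms from D to G equals the number of homomorphisms from D to H, then G is isomorphic to H. -/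
open SimpleGraph

/-- A homomorphism `h : F →g G` is surjective onto `G` if its image includes every vertex and
every edge of `G`. -/
def IsSurjectiveHom {α β : Type*} (F : SimpleGraph α) (G : SimpleGraph β) (h : F →g G) : Prop :=
  Function.Surjective h ∧ ∀ u v : β, G.Adj u v → ∃ a b : α, F.Adj a b ∧ h a = u ∧ h b = v

/-- Membership of a graph `D` in the extension class `Ext(𝓕)` of a class `𝓕` of finite simple
graphs: there are members `F₁, F₂` of `𝓕` with a surjective homomorphism from `F₁` onto `D` and
an injective homomorphism from `D` into `F₂`. -/
def MemExt (𝓕 : ∀ n : ℕ, Set (SimpleGraph (Fin n))) {k : ℕ} (D : SimpleGraph (Fin k)) : Prop :=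
  (∃ (m : ℕ) (F₁ : SimpleGraph (Fin m)), F₁ ∈ 𝓕 m ∧ ∃ h : F₁ →g D, IsSurjectiveHom F₁ D h) ∧
  (∃ (m : ℕ) (F₂ : SimpleGraph (Fin m)), F₂ ∈ 𝓕 m ∧ ∃ h : D →g F₂, Function.Injective h)

namespace LHC

variable {α β γ : Type*}

instance setoidFinite [Finite α] : Finite (Setoid α) :=
  Finite.of_injective (fun s : Setoid α => s.r) fun a b h => by cases a; cases b; cases h; rfl

noncomputable instance setoidFintype [Finite α] : Fintype (Setoid α) := Fintype.ofFinite _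

instance homFinite [Finite α] [Finite β] (D : SimpleGraph α) (X : SimpleGraph β) :
    Finite (D →g X) :=
  Finite.of_injective (fun f : D →g X => ⇑f) DFunLike.coe_injective

lemma surj_id (G : SimpleGraph α) : IsSurjectiveHom G G Hom.id :=
  ⟨Function.surjective_id, fun u v h => ⟨u, v, h, rfl, rfl⟩⟩

lemma surj_comp {F : SimpleGraph α} {D : SimpleGraph β} {E : SimpleGraph γ}
    {h₁ : F →g D} {h₂ : D →g E} (H1 : IsSurjectiveHom F D h₁) (H2 : IsSurjectiveHom D E h₂) :
    IsSurjectiveHom F E (h₂.comp h₁) := by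
  refine ⟨H2.1.comp H1.1, fun u v huv => ?_⟩
  obtain ⟨a, b, hab, ha, hb⟩ := H2.2 u v huv
  obtain ⟨a', b', hab', ha', hb'⟩ := H1.2 a b hab
  refine ⟨a', b', hab', ?_, ?_⟩
  · show h₂ (h₁ a') = u
    rw [ha', ha]
  · show h₂ (h₁ b') = v
    rw [hb', hb]

lemma surj_iso {D : SimpleGraph α} {D' : SimpleGraph β} (φ : D ≃g D') :
    IsSurjectiveHom D D' φ.toHom := by
  refine ⟨φ.toEquiv.surjective, fun u v h => ?_⟩
  refine ⟨φ.symm u, φ.symm v, φ.symm.toHom.map_adj h, ?_, ?_⟩ <;> simp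

/-- quotient graph -/
def quotG (D : SimpleGraph α) (r : Setoid α) : SimpleGraph (Quotient r) where
  Adj x y := x ≠ y ∧ ∃ u v, D.Adj u v ∧ Quotient.mk r u = x ∧ Quotient.mk r v = y
  symm := ⟨by rintro x y ⟨h, u, v, a, hu, hv⟩; exact ⟨h.symm, v, u, a.symm, hv, hu⟩⟩
  loopless := ⟨fun x h => h.1 rfl⟩

def IsProper (D : SimpleGraph α) (r : Setoid α) : Prop := ∀ u v, D.Adj u v → ¬ r u v

def quotHom (D : SimpleGraph α) (r : Setoid α) (hr : IsProper D r) : D →g quotG D r where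
  toFun := Quotient.mk r
  map_rel' := fun {u v} h =>
    ⟨fun he => hr u v h (Quotient.exact he), u, v, h, rfl, rfl⟩

lemma surj_quotHom (D : SimpleGraph α) (r : Setoid α) (hr : IsProper D r) :
    IsSurjectiveHom D (quotG D r) (quotHom D r hr) :=
  ⟨Quotient.mk''_surjective, fun u v h => h.2⟩

lemma ker_proper {D : SimpleGraph α} {X : SimpleGraph β} (f : D →g X) :
    IsProper D (Setoid.ker ⇑f) :=
  fun u v h hr => (f.map_adj h).ne (Setoid.ker_def.mp hr)

/-- fibers of the kernel map correspond to injective homs from the quotient -/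
noncomputable def fiberEquiv (D : SimpleGraph α) (r : Setoid α) (hr : IsProper D r)
    (X : SimpleGraph β) :
    {f : D →g X // Setoid.ker ⇑f = r} ≃ {g : quotG D r →g X // Function.Injective ⇑g} where
  toFun f := by
    refine ⟨⟨Quotient.lift ⇑f.1 (fun u v huv => ?_), ?_⟩, ?_⟩
    · refine Setoid.ker_def.mp ?_
      rw [f.2]
      exact huv
    · rintro x y ⟨hne, u, v, huv, rfl, rfl⟩
      exact f.1.map_adj huv
    · intro x y
      induction x using Quotient.ind
      induction y using Quotient.ind
      intro h
      refine Quotient.sound ?_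
      rw [← f.2]
      exact Setoid.ker_def.mpr h
  invFun g := by
    refine ⟨g.1.comp (quotHom D r hr), ?_⟩
    refine Setoid.ext fun u v => ?_
    constructor
    · intro h
      exact Quotient.exact (g.2 h)
    · intro h
      exact congrArg ⇑g.1 (Quotient.sound h)
  left_inv f := by
    ext u
    rfl
  right_inv g := by
    ext x
    induction x using Quotient.ind
    rfl

noncomputable def botFiberEquiv (D : SimpleGraph α) (X : SimpleGraph β) :
    {f : D →g X // Setoid.ker ⇑f = ⊥} ≃ {f : D →g X // Function.Injective ⇑f} :=
  Equiv.subtypeEquivRight fun f => (Setoid.injective_iff_ker_bot ⇑f).symm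

lemma nat_card_sigma {ι : Type*} [Fintype ι] (f : ι → Type*) [∀ i, Finite (f i)] :
    Nat.card ((i : ι) × f i) = ∑ i : ι, Nat.card (f i) := by
  haveI : ∀ i, Fintype (f i) := fun i => Fintype.ofFinite _
  simp [Nat.card_eq_fintype_card, Fintype.card_sigma]

lemma homcount [Finite α] [Finite β] (D : SimpleGraph α) (X : SimpleGraph β) :
    Nat.card (D →g X) = ∑ r : Setoid α, Nat.card {f : D →g X // Setoid.ker ⇑f = r} := by
  rw [← nat_card_sigma]
  exact (Nat.card_congr (Equiv.sigmaFiberEquiv (fun f : D →g X => Setoid.ker ⇑f))).symm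

/-- number of injective homomorphisms -/
noncomputable def injCard (D : SimpleGraph α) (X : SimpleGraph β) : ℕ :=
  Nat.card {f : D →g X // Function.Injective ⇑f}

def injEquiv {D : SimpleGraph α} {D' : SimpleGraph β} (φ : D ≃g D') (X : SimpleGraph γ) :
    {f : D →g X // Function.Injective ⇑f} ≃ {g : D' →g X // Function.Injective ⇑g} where
  toFun f := ⟨f.1.comp φ.symm.toHom, f.2.comp φ.symm.injective⟩
  invFun g := ⟨g.1.comp φ.toHom, g.2.comp φ.injective⟩
  left_inv f := by ext u; simp
  right_inv g := by ext u; simp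

lemma injCard_congr {D : SimpleGraph α} {D' : SimpleGraph β} (φ : D ≃g D') (X : SimpleGraph γ) :
    injCard D X = injCard D' X := Nat.card_congr (injEquiv φ X)

/-- transport a graph along an equivalence of vertex types -/
def transport (D : SimpleGraph α) (e : α ≃ β) : SimpleGraph β where
  Adj x y := D.Adj (e.symm x) (e.symm y)
  symm := ⟨fun x y h => h.symm⟩
  loopless := ⟨fun x h => D.loopless.irrefl _ h⟩

def transportIso (D : SimpleGraph α) (e : α ≃ β) : D ≃g transport D e :=
  { toEquiv := e, map_rel_iff' := by intros; simp [transport] }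

variable {α β γ : Type*}

lemma quot_card_lt {k : ℕ} (r : Setoid (Fin k)) (hr : r ≠ ⊥) : Nat.card (Quotient r) < k := by
  classical
  obtain ⟨u, v, hne, hrel⟩ : ∃ u v : Fin k, u ≠ v ∧ r u v := by
    by_contra hc
    push_neg at hc
    apply hr
    refine Setoid.ext fun u v => ?_
    constructor
    · intro h
      by_contra hne
      exact hc u v hne h
    · rintro h
      have : u = v := h
      subst this
      exact r.refl u
  haveI : DecidableRel (fun x y : Fin k => x ≈ y) := fun _ _ => Classical.dec _
  have := Fintype.card_lt_of_surjective_not_injective (Quotient.mk r) Quotient.mk''_surjective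
    (fun hi => hne (hi (Quotient.sound hrel)))
  simpa [Nat.card_eq_fintype_card] using this

lemma iso_of_inj {p : ℕ} (G H : SimpleGraph (Fin p)) (f : G →g H) (hf : Function.Injective ⇑f)
    (g : H →g G) (hg : Function.Injective ⇑g) : Nonempty (G ≃g H) := by
  classical
  set τ : Fin p → Fin p := ⇑f ∘ ⇑g with hτdef
  have hτ : Function.Bijective τ := Finite.injective_iff_bijective.mp (hf.comp hg)
  set eτ : Equiv.Perm (Fin p) := Equiv.ofBijective τ hτ with heτ
  set n := orderOf eτ with hn
  have hnpos : 0 < n := orderOf_pos eτ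
  have hτn : τ^[n] = id := by
    have h1 : ⇑(eτ ^ n) = τ^[n] := Equiv.Perm.coe_pow eτ n
    rw [pow_orderOf_eq_one] at h1
    rw [← h1]
    rfl
  set σ : Fin p → Fin p := ⇑g ∘ ⇑f with hσdef
  have hcomm : ∀ m x, τ^[m] (f x) = f (σ^[m] x) := by
    intro m
    induction m with
    | zero => simp
    | succ m ih =>
      intro x
      rw [Function.iterate_succ_apply', Function.iterate_succ_apply', ih]
      rfl
  have hσn : ∀ x, σ^[n] x = x := by
    intro x
    apply hf
    rw [← hcomm, hτn]
    rfl
  have hsp : (n-1).succ = n := Nat.succ_pred_eq_of_pos hnpos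
  have hσadj : ∀ m u v, G.Adj u v → G.Adj (σ^[m] u) (σ^[m] v) := by
    intro m
    induction m with
    | zero => intro u v h; simpa using h
    | succ m ih =>
      intro u v h
      rw [Function.iterate_succ_apply', Function.iterate_succ_apply']
      exact g.map_adj (f.map_adj (ih u v h))
  refine ⟨⟨⟨⇑f, fun x => g (τ^[n-1] x), ?_, ?_⟩, ?_⟩⟩
  · intro u
    show g (τ^[n-1] (f u)) = u
    rw [hcomm]
    show σ (σ^[n-1] u) = u
    rw [← Function.iterate_succ_apply' σ, hsp]
    exact hσn u
  · intro x
    show f (g (τ^[n-1] x)) = x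
    show τ (τ^[n-1] x) = x
    rw [← Function.iterate_succ_apply' τ, hsp, hτn]
    rfl
  · refine fun {u v} => ⟨fun h => ?_, fun h => f.map_adj h⟩
    have h1 : G.Adj (g (f u)) (g (f v)) := g.map_adj h
    have h2 := hσadj (n-1) _ _ h1
    rwa [show g (f u) = σ u from rfl, show g (f v) = σ v from rfl,
      ← Function.iterate_succ_apply, ← Function.iterate_succ_apply,
      hsp, hσn, hσn] at h2

lemma main (𝓕 : ∀ n : ℕ, Set (SimpleGraph (Fin n)))
    {p q : ℕ} (G : SimpleGraph (Fin p)) (H : SimpleGraph (Fin q))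
    (hG : G ∈ 𝓕 p) (hH : H ∈ 𝓕 q)
    (hhom : ∀ (k : ℕ) (D : SimpleGraph (Fin k)), MemExt 𝓕 D →
      Nat.card (D →g G) = Nat.card (D →g H)) :
    ∀ (k : ℕ) (D : SimpleGraph (Fin k)),
      ((∃ h : G →g D, IsSurjectiveHom G D h) ∨ (∃ h : H →g D, IsSurjectiveHom H D h)) →
      injCard D G = injCard D H := by
  intro k
  induction k using Nat.strong_induction_on with
  | _ k IH =>
  intro D hD
  classical
  by_cases hemb : (∃ f : D →g G, Function.Injective ⇑f) ∨ (∃ f : D →g H, Function.Injective ⇑f)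
  · have hm : MemExt 𝓕 D := by
      constructor
      · rcases hD with ⟨h, hs⟩ | ⟨h, hs⟩
        · exact ⟨p, G, hG, h, hs⟩
        · exact ⟨q, H, hH, h, hs⟩
      · rcases hemb with ⟨f, hf⟩ | ⟨f, hf⟩
        · exact ⟨p, G, hG, f, hf⟩
        · exact ⟨q, H, hH, f, hf⟩
    have hsum := hhom k D hm
    rw [homcount D G, homcount D H] at hsum
    have hfib : ∀ r : Setoid (Fin k), r ≠ ⊥ →
        Nat.card {f : D →g G // Setoid.ker ⇑f = r}
          = Nat.card {f : D →g H // Setoid.ker ⇑f = r} := by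
      intro r hr
      by_cases hp : IsProper D r
      · rw [Nat.card_congr (fiberEquiv D r hp G), Nat.card_congr (fiberEquiv D r hp H)]
        have hiso := transportIso (quotG D r) (Finite.equivFin (Quotient r))
        show injCard (quotG D r) G = injCard (quotG D r) H
        rw [injCard_congr hiso G, injCard_congr hiso H]
        apply IH (Nat.card (Quotient r)) (quot_card_lt r hr)
        rcases hD with ⟨h, hs⟩ | ⟨h, hs⟩
        · exact Or.inl ⟨hiso.toHom.comp ((quotHom D r hp).comp h),
            surj_comp (surj_comp hs (surj_quotHom D r hp)) (surj_iso hiso)⟩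
        · exact Or.inr ⟨hiso.toHom.comp ((quotHom D r hp).comp h),
            surj_comp (surj_comp hs (surj_quotHom D r hp)) (surj_iso hiso)⟩
      · have e1 : IsEmpty {f : D →g G // Setoid.ker ⇑f = r} :=
          ⟨fun f => hp (by rw [← f.2]; exact ker_proper f.1)⟩
        have e2 : IsEmpty {f : D →g H // Setoid.ker ⇑f = r} :=
          ⟨fun f => hp (by rw [← f.2]; exact ker_proper f.1)⟩
        rw [Nat.card_of_isEmpty, Nat.card_of_isEmpty]
    have hbot : Nat.card {f : D →g G // Setoid.ker ⇑f = ⊥}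
        = Nat.card {f : D →g H // Setoid.ker ⇑f = ⊥} := by
      rw [← Finset.add_sum_erase Finset.univ _ (Finset.mem_univ (⊥ : Setoid (Fin k))),
        ← Finset.add_sum_erase Finset.univ _ (Finset.mem_univ (⊥ : Setoid (Fin k)))] at hsum
      have heq : ∑ r ∈ Finset.univ.erase (⊥ : Setoid (Fin k)),
            Nat.card {f : D →g G // Setoid.ker ⇑f = r}
          = ∑ r ∈ Finset.univ.erase (⊥ : Setoid (Fin k)),
            Nat.card {f : D →g H // Setoid.ker ⇑f = r} :=
        Finset.sum_congr rfl fun r hr => hfib r (Finset.ne_of_mem_erase hr)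
      omega
    rw [injCard, injCard, ← Nat.card_congr (botFiberEquiv D G),
      ← Nat.card_congr (botFiberEquiv D H)]
    exact hbot
  · push_neg at hemb
    have e1 : IsEmpty {f : D →g G // Function.Injective ⇑f} := ⟨fun f => hemb.1 f.1 f.2⟩
    have e2 : IsEmpty {f : D →g H // Function.Injective ⇑f} := ⟨fun f => hemb.2 f.1 f.2⟩
    rw [injCard, injCard, Nat.card_of_isEmpty, Nat.card_of_isEmpty]

end LHC

/-- For graphs `G, H` in a non-empty isomorphism-closed class `𝓕`, equality of the
left-homomorphism counts from every graph of `Ext(𝓕)` implies that `G` and `H` are isomorphic. -/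
theorem left_hom_counts_ext_determine_iso
    (𝓕 : ∀ n : ℕ, Set (SimpleGraph (Fin n)))
    (hne : ∃ (n : ℕ) (G : SimpleGraph (Fin n)), G ∈ 𝓕 n)
    (hiso : ∀ (m n : ℕ) (G : SimpleGraph (Fin m)) (H : SimpleGraph (Fin n)),
      G ∈ 𝓕 m → Nonempty (G ≃g H) → H ∈ 𝓕 n)
    {p q : ℕ} (G : SimpleGraph (Fin p)) (H : SimpleGraph (Fin q))
    (hG : G ∈ 𝓕 p) (hH : H ∈ 𝓕 q)
    (hhom : ∀ (k : ℕ) (D : SimpleGraph (Fin k)), MemExt 𝓕 D →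
      Nat.card (D →g G) = Nat.card (D →g H)) :
    Nonempty (G ≃g H) := by
  classical
  have h1 : LHC.injCard G G = LHC.injCard G H :=
    LHC.main 𝓕 G H hG hH hhom p G (Or.inl ⟨Hom.id, LHC.surj_id G⟩)
  have h2 : LHC.injCard H G = LHC.injCard H H :=
    LHC.main 𝓕 G H hG hH hhom q H (Or.inr ⟨Hom.id, LHC.surj_id H⟩)
  have hGGpos : 0 < LHC.injCard G G := by
    haveI : Nonempty {f : G →g G // Function.Injective ⇑f} :=
      ⟨⟨Hom.id, fun a b h => h⟩⟩
    exact Nat.card_pos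
  have hHHpos : 0 < LHC.injCard H H := by
    haveI : Nonempty {f : H →g H // Function.Injective ⇑f} :=
      ⟨⟨Hom.id, fun a b h => h⟩⟩
    exact Nat.card_pos
  have hf : Nonempty {f : G →g H // Function.Injective ⇑f} := by
    have : 0 < LHC.injCard G H := h1 ▸ hGGpos
    exact (Nat.card_pos_iff.mp this).1
  have hg : Nonempty {f : H →g G // Function.Injective ⇑f} := by
    have : 0 < LHC.injCard H G := h2.symm ▸ hHHpos
    exact (Nat.card_pos_iff.mp this).1
  obtain ⟨f, hfinj⟩ := hf
  obtain ⟨g, hginj⟩ := hg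
  have hpq : p = q := by
    have h1 : p ≤ q := by simpa using Fintype.card_le_of_injective ⇑f hfinj
    have h2 : q ≤ p := by simpa using Fintype.card_le_of_injective ⇑g hginj
    omega
  subst hpq
  exact LHC.iso_of_inj G H f hfinj g hginj
end

section
/- There is no class 𝓕 of finite simple graphs (closed under isomorphism) such that for every two graphs G and H: G and H are fractionally isomorphic if and only if for every graph F ∈ 𝓕, the number of homomorphisms from G to F equals the number of homomorphisms from H to F. -/
open SimpleGraph

open Classical in
/-- The rational adjacency matrix of a simple graph. -/
noncomputable def adjMatQ {V : Type*} (G : SimpleGraph V) : Matrix V V ℚ :=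
  Matrix.of fun i j => if G.Adj i j then 1 else 0

/-- Fractional isomorphism: a doubly stochastic non-negative rational matrix `X`
with `A * X = X * B`, where `A` and `B` are the adjacency matrices.  (For graphs with different
numbers of vertices no such matrix exists, so they are not fractionally isomorphic.) -/
noncomputable def FracIso {V W : Type*} [Fintype V] [Fintype W]
    (G : SimpleGraph V) (H : SimpleGraph W) : Prop :=
  ∃ X : Matrix V W ℚ, (∀ i j, 0 ≤ X i j) ∧
    adjMatQ G * X = X * adjMatQ H ∧
    (∀ i, ∑ j, X i j = 1) ∧ (∀ j, ∑ i, X i j = 1)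

set_option linter.unusedSectionVars false

open Finset

variable {V : Type*} [Fintype V] [DecidableEq V]

noncomputable def wp (A : Matrix V V ℚ) : (m : ℕ) → V → (Fin m → V) → V → ℚ
  | 0, u, _, v => A u v
  | m+1, u, φ, v => A u (φ 0) * wp A m (φ 0) (Fin.tail φ) v

lemma L1 (A : Matrix V V ℚ) : ∀ (m : ℕ) (u v : V),
    (A ^ (m+1)) u v = ∑ φ : Fin m → V, wp A m u φ v := by
  intro m
  induction m with
  | zero =>
    intro u v
    simp [wp]
  | succ m ih =>
    intro u v
    rw [pow_succ']
    rw [Matrix.mul_apply]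
    have : ∀ x, (A ^ (m+1)) x v = ∑ ψ : Fin m → V, wp A m x ψ v := fun x => ih x v
    simp_rw [this, Finset.mul_sum]
    have he := Fintype.sum_equiv (Fin.consEquiv (fun _ : Fin (m+1) => V))
      (fun p => wp A (m+1) u ((Fin.consEquiv (fun _ : Fin (m+1) => V)) p) v)
      (fun φ => wp A (m+1) u φ v) (fun p => rfl)
    rw [← he, Fintype.sum_prod_type]
    refine Finset.sum_congr rfl fun x _ => Finset.sum_congr rfl fun ψ _ => ?_
    simp [wp, Fin.consEquiv]

lemma wp_prod (A : Matrix V V ℚ) : ∀ (n : ℕ) (f : Fin (n+1) → V) (v : V),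
    (∏ i : Fin (n+1), A (f i) (if h : (i:ℕ)+1 < n+1 then f ⟨(i:ℕ)+1, h⟩ else v))
      = wp A n (f 0) (Fin.tail f) v := by
  intro n
  induction n with
  | zero =>
    intro f v
    simp [wp]
  | succ n ih =>
    intro f v
    rw [Fin.prod_univ_succ]
    simp only [Fin.val_zero, zero_add]
    rw [dif_pos (by omega : 1 < n+1+1)]
    have h1 : f ⟨1, by omega⟩ = f 1 := congrArg f (by ext; simp)
    have h2 : (∏ i : Fin (n+1),
        A (f i.succ) (if h : ((i.succ :ℕ))+1 < n+2 then f ⟨(i.succ:ℕ)+1, h⟩ else v))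
        = ∏ i : Fin (n+1),
          A (Fin.tail f i) (if h : (i:ℕ)+1 < n+1 then Fin.tail f ⟨(i:ℕ)+1, h⟩ else v) := by
      refine Finset.prod_congr rfl fun i _ => ?_
      congr 1
      by_cases h : (i:ℕ)+1 < n+1
      · rw [dif_pos (by simpa using Nat.succ_lt_succ h), dif_pos h]
        simp [Fin.tail, Fin.succ]
      · rw [dif_neg (by simpa using fun hh => h (Nat.lt_of_succ_lt_succ hh)), dif_neg h]
    rw [h1, h2, ih (Fin.tail f) v]
    show _ = wp A (n+1) (f 0) (Fin.tail f) v
    rw [wp]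
    congr 1

lemma fin_add_one_eq {n : ℕ} (i : Fin (n+1)) :
    i + 1 = if h : (i:ℕ)+1 < n+1 then (⟨(i:ℕ)+1, h⟩ : Fin (n+1)) else 0 := by
  ext
  split_ifs with h
  · simp [Fin.add_def, Nat.mod_eq_of_lt h]
  · have : (i:ℕ) = n := by omega
    simp [Fin.add_def, this]

lemma sum_cycProd (A : Matrix V V ℚ) (n : ℕ) :
    ∑ φ : Fin (n+1) → V, ∏ i : Fin (n+1), A (φ i) (φ (i+1)) = Matrix.trace (A^(n+1)) := by
  have step : ∀ φ : Fin (n+1) → V,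
      ∏ i : Fin (n+1), A (φ i) (φ (i+1)) = wp A n (φ 0) (Fin.tail φ) (φ 0) := by
    intro φ
    rw [← wp_prod A n φ (φ 0)]
    refine Finset.prod_congr rfl fun i _ => ?_
    rw [fin_add_one_eq i]
    by_cases h : (i:ℕ)+1 < n+1
    · rw [dif_pos h, dif_pos h]
    · rw [dif_neg h, dif_neg h]
  simp_rw [step]
  have he := Fintype.sum_equiv (Fin.consEquiv (fun _ : Fin (n+1) => V))
    (fun p => wp A n (((Fin.consEquiv (fun _ : Fin (n+1) => V)) p) 0)
      (Fin.tail ((Fin.consEquiv (fun _ : Fin (n+1) => V)) p))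
      (((Fin.consEquiv (fun _ : Fin (n+1) => V)) p) 0))
    (fun φ => wp A n (φ 0) (Fin.tail φ) (φ 0)) (fun p => rfl)
  rw [← he, Fintype.sum_prod_type]
  have : ∀ (x : V) (ψ : Fin n → V),
      wp A n (((Fin.consEquiv (fun _ : Fin (n+1) => V)) (x, ψ)) 0)
      (Fin.tail ((Fin.consEquiv (fun _ : Fin (n+1) => V)) (x, ψ)))
      (((Fin.consEquiv (fun _ : Fin (n+1) => V)) (x, ψ)) 0) = wp A n x ψ x := by
    intro x ψ
    simp [Fin.consEquiv]
  simp_rw [this]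
  rw [Matrix.trace]
  refine Finset.sum_congr rfl fun x _ => ?_
  rw [Matrix.diag, ← L1]

lemma cs_eq {ι : Type*} [Fintype ι] (f g : ι → ℚ)
    (h : (∑ i, f i * g i)^2 = (∑ i, f i^2) * (∑ i, g i^2)) (hf : f ≠ 0) :
    ∃ s : ℚ, ∀ i, g i = s * f i := by
  have expand : ∑ i, ∑ j, (f i * g j - f j * g i)^2
      = 2 * ((∑ i, f i^2) * (∑ i, g i^2) - (∑ i, f i * g i)^2) := by
    have e1 : ∀ i j : ι, (f i * g j - f j * g i)^2
        = f i^2 * g j^2 + g i^2 * f j^2 - 2 * ((f i * g i) * (f j * g j)) := by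
      intro i j; ring
    simp_rw [e1]
    rw [Finset.sum_congr rfl (fun i _ => Finset.sum_sub_distrib _ _)]
    rw [Finset.sum_sub_distrib]
    rw [Finset.sum_congr rfl (fun i _ => Finset.sum_add_distrib)]
    rw [Finset.sum_add_distrib]
    simp_rw [← Finset.mul_sum, ← Finset.sum_mul]
    ring
  rw [h] at expand
  have hz : ∑ i, ∑ j, (f i * g j - f j * g i)^2 = 0 := by rw [expand]; ring
  have key : ∀ i j : ι, f i * g j = f j * g i := by
    intro i j
    have h1 := (Finset.sum_eq_zero_iff_of_nonneg
      (fun i _ => Finset.sum_nonneg (fun j _ => sq_nonneg _))).1 hz i (Finset.mem_univ i)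
    have h2 := (Finset.sum_eq_zero_iff_of_nonneg
      (fun j _ => sq_nonneg _)).1 h1 j (Finset.mem_univ j)
    have := sq_eq_zero_iff.1 h2
    linarith
  obtain ⟨i₀, hi₀⟩ : ∃ i₀, f i₀ ≠ 0 := by
    by_contra hc
    push_neg at hc
    exact hf (funext hc)
  refine ⟨g i₀ / f i₀, fun j => ?_⟩
  have := key i₀ j
  field_simp
  linarith [key i₀ j]

lemma pow_symm (A : Matrix V V ℚ) (hA : A.IsSymm) (n : ℕ) (i j : V) :
    (A^n) i j = (A^n) j i := by
  have : (A^n).IsSymm := hA.pow n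
  conv_lhs => rw [← this]
  rfl

lemma trace_split (A : Matrix V V ℚ) (hA : A.IsSymm) (m n : ℕ) :
    Matrix.trace (A^(m+n)) = ∑ p : V × V, (A^m) p.1 p.2 * (A^n) p.1 p.2 := by
  rw [pow_add, Matrix.trace, Fintype.sum_prod_type]
  refine Finset.sum_congr rfl fun i _ => ?_
  rw [Matrix.diag, Matrix.mul_apply]
  exact Finset.sum_congr rfl fun j _ => by rw [pow_symm A hA n j i]

lemma adjMatQ_entries {k : ℕ} (F : SimpleGraph (Fin k)) :
    ∀ i j, adjMatQ F i j = 0 ∨ adjMatQ F i j = 1 := by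
  intro i j
  unfold adjMatQ
  by_cases h : F.Adj i j
  · right; simp [h]
  · left; simp [h]

lemma adjMatQ_isSymm {k : ℕ} (F : SimpleGraph (Fin k)) : (adjMatQ F).IsSymm := by
  ext i j
  unfold adjMatQ
  simp only [Matrix.transpose_apply, Matrix.of_apply]
  by_cases h : F.Adj i j
  · rw [if_pos h, if_pos h.symm]
  · rw [if_neg h, if_neg (fun hh => h hh.symm)]

lemma adjMatQ_symm_apply {k : ℕ} (F : SimpleGraph (Fin k)) (i j : Fin k) :
    adjMatQ F i j = adjMatQ F j i := by
  conv_lhs => rw [← adjMatQ_isSymm F]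
  rfl

lemma diag_sq_zero {k : ℕ} (F : SimpleGraph (Fin k))
    (h : ∀ i : Fin k, ((adjMatQ F)^2) i i = 0) : adjMatQ F = 0 := by
  set A := adjMatQ F with hA
  ext i j
  have h2 : ∑ l, A i l * A i l = 0 := by
    have := h i
    rw [pow_two, Matrix.mul_apply] at this
    rw [← this]
    exact Finset.sum_congr rfl fun l _ => by
      rw [show A l i = A i l from adjMatQ_symm_apply F l i]
  have := (Finset.sum_eq_zero_iff_of_nonneg
    (fun l _ => mul_self_nonneg (A i l))).1 h2 j (Finset.mem_univ j)
  have : A i j = 0 := by nlinarith [this]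
  simpa using this

theorem edgeless_of_cs {k : ℕ} (F : SimpleGraph (Fin k))
    (h : Matrix.trace ((adjMatQ F)^5)^2
      = Matrix.trace ((adjMatQ F)^4) * Matrix.trace ((adjMatQ F)^6)) :
    ∀ i j, ¬ F.Adj i j := by
  set A := adjMatQ F with hAdef
  have hA : A.IsSymm := adjMatQ_isSymm F
  have hzero : A = 0 := by
    by_cases hf2 : (fun p : Fin k × Fin k => (A^2) p.1 p.2) = 0
    · apply diag_sq_zero
      intro i
      exact congrFun hf2 (i, i)
    · -- CS on f = A², g = A³
      have h5 : Matrix.trace (A^5) = ∑ p : Fin k × Fin k, (A^2) p.1 p.2 * (A^3) p.1 p.2 :=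
        trace_split A hA 2 3
      have h4 : Matrix.trace (A^4) = ∑ p : Fin k × Fin k, ((A^2) p.1 p.2)^2 := by
        rw [trace_split A hA 2 2]; exact Finset.sum_congr rfl fun p _ => (sq _).symm
      have h6 : Matrix.trace (A^6) = ∑ p : Fin k × Fin k, ((A^3) p.1 p.2)^2 := by
        rw [trace_split A hA 3 3]; exact Finset.sum_congr rfl fun p _ => (sq _).symm
      rw [h5, h4, h6] at h
      obtain ⟨s, hs⟩ := cs_eq _ _ h hf2
      -- now tr A³ = s tr A², tr A⁴ = s tr A³
      have t3 : Matrix.trace (A^3) = ∑ p : Fin k × Fin k, (A^1) p.1 p.2 * (A^2) p.1 p.2 :=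
        trace_split A hA 1 2
      have t2 : Matrix.trace (A^2) = ∑ p : Fin k × Fin k, ((A^1) p.1 p.2)^2 := by
        rw [trace_split A hA 1 1]; exact Finset.sum_congr rfl fun p _ => (sq _).symm
      have t4 : Matrix.trace (A^4) = ∑ p : Fin k × Fin k, ((A^2) p.1 p.2)^2 := h4
      have r4 : Matrix.trace (A^4) = s * Matrix.trace (A^3) := by
        rw [trace_split A hA 1 3, t3, Finset.mul_sum]
        exact Finset.sum_congr rfl fun p _ => by rw [hs p]; ring
      have r3 : Matrix.trace (A^3) = s * Matrix.trace (A^2) := by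
        rw [trace_split A hA 0 3, trace_split A hA 0 2, Finset.mul_sum]
        exact Finset.sum_congr rfl fun p _ => by rw [hs p]; ring
      have hcs2 : (Matrix.trace (A^3))^2 = Matrix.trace (A^2) * Matrix.trace (A^4) := by
        rw [r3, r4, r3]; ring
      rw [t3, t2, t4] at hcs2
      by_cases hf1 : (fun p : Fin k × Fin k => (A^1) p.1 p.2) = 0
      · ext i j
        have := congrFun hf1 (i, j)
        simpa using this
      · obtain ⟨u, hu⟩ := cs_eq _ _ hcs2 hf1
        apply diag_sq_zero
        intro i
        have hdiag : A i i = 0 := by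
          rw [hAdef]; unfold adjMatQ; simp
        have := hu (i, i)
        simp only [pow_one] at this
        rw [this, hdiag, mul_zero]
  intro i j hadj
  have : A i j = 1 := by rw [hAdef]; unfold adjMatQ; simp [hadj]
  rw [hzero] at this
  simp at this

def G₁ : SimpleGraph (Fin 10) := SimpleGraph.fromRel
  (fun i j => (i.val, j.val) ∈ [(0,1),(1,2),(2,3),(3,4),(4,0),(5,6),(6,7),(7,8),(8,9),(9,5)])

def G₂ : SimpleGraph (Fin 10) := SimpleGraph.fromRel
  (fun i j => (i.val, j.val) ∈ [(0,1),(1,2),(2,3),(3,0),(4,5),(5,6),(6,7),(7,8),(8,9),(9,4)])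

def K₃ : SimpleGraph (Fin 3) := SimpleGraph.fromRel
  (fun i j => (i.val, j.val) ∈ [(0,1),(1,2),(2,0)])

def P₃ : SimpleGraph (Fin 3) := SimpleGraph.fromRel
  (fun i j => (i.val, j.val) ∈ [(0,1),(1,2)])

instance : DecidableRel G₁.Adj := fun i j =>
  decidable_of_iff' _ (SimpleGraph.fromRel_adj _ i j)
instance : DecidableRel G₂.Adj := fun i j =>
  decidable_of_iff' _ (SimpleGraph.fromRel_adj _ i j)
instance : DecidableRel K₃.Adj := fun i j =>
  decidable_of_iff' _ (SimpleGraph.fromRel_adj _ i j)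
instance : DecidableRel P₃.Adj := fun i j =>
  decidable_of_iff' _ (SimpleGraph.fromRel_adj _ i j)

lemma adjMatQ_ite {W : Type*} (G : SimpleGraph W) [DecidableRel G.Adj] (i j : W) :
    adjMatQ G i j = if G.Adj i j then (1:ℚ) else 0 := by
  unfold adjMatQ
  by_cases h : G.Adj i j
  · rw [Matrix.of_apply, if_pos h, if_pos h]
  · rw [Matrix.of_apply, if_neg h, if_neg h]

example : G₁.Adj 0 1 := by decide
example : ¬ G₁.Adj 0 2 := by decide

lemma rowsum1 (i : Fin 10) : ∑ j, adjMatQ G₁ i j = 2 := by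
  simp only [adjMatQ_ite]
  fin_cases i <;> simp [Fin.sum_univ_succ] <;> decide

lemma rowsum2 (i : Fin 10) : ∑ j, adjMatQ G₂ i j = 2 := by
  simp only [adjMatQ_ite]
  fin_cases i <;> simp [Fin.sum_univ_succ] <;> decide

lemma adjMatQ_symm_apply' {W : Type*} (F : SimpleGraph W) (i j : W) :
    adjMatQ F i j = adjMatQ F j i := by
  unfold adjMatQ
  by_cases h : F.Adj i j
  · rw [Matrix.of_apply, Matrix.of_apply, if_pos h, if_pos h.symm]
  · rw [Matrix.of_apply, Matrix.of_apply, if_neg h, if_neg (fun hh => h hh.symm)]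

lemma fraciso_G₁_G₂ : FracIso G₁ G₂ := by
  refine ⟨fun _ _ => 1/10, fun i j => by norm_num, ?_, fun i => by simp, fun j => by simp⟩
  ext i j
  show ∑ k, adjMatQ G₁ i k * (1/10) = ∑ k, (1/10 : ℚ) * adjMatQ G₂ k j
  have hc : ∑ k, adjMatQ G₂ k j = 2 := by
    rw [Finset.sum_congr rfl fun k _ => adjMatQ_symm_apply' G₂ k j]
    exact rowsum2 j
  calc ∑ k, adjMatQ G₁ i k * (1/10) = (∑ k, adjMatQ G₁ i k) * (1/10) := by
        rw [Finset.sum_mul]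
    _ = 2 * (1/10) := by rw [rowsum1]
    _ = (∑ k, adjMatQ G₂ k j) * (1/10) := by rw [hc]
    _ = ∑ k, (1/10 : ℚ) * adjMatQ G₂ k j := by rw [Finset.sum_mul]; exact Finset.sum_congr rfl fun k _ => mul_comm _ _

lemma fraciso_sum_eq {m n : ℕ} {G : SimpleGraph (Fin m)} {H : SimpleGraph (Fin n)}
    (h : FracIso G H) :
    ∑ i, ∑ j, adjMatQ G i j = ∑ i, ∑ j, adjMatQ H i j := by
  obtain ⟨X, _, hc, hr, hcol⟩ := h
  have h1 : ∑ i, ∑ j, (adjMatQ G * X) i j = ∑ i, ∑ k, adjMatQ G i k := by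
    refine Finset.sum_congr rfl fun i _ => ?_
    simp_rw [Matrix.mul_apply]
    rw [Finset.sum_comm]
    refine Finset.sum_congr rfl fun k _ => ?_
    rw [← Finset.mul_sum, hr k, mul_one]
  have h2 : ∑ i, ∑ j, (X * adjMatQ H) i j = ∑ k, ∑ j, adjMatQ H k j := by
    calc ∑ i, ∑ j, (X * adjMatQ H) i j
        = ∑ j, ∑ i, (X * adjMatQ H) i j := Finset.sum_comm
      _ = ∑ j, ∑ k, adjMatQ H k j := Finset.sum_congr rfl fun j _ => by
          simp_rw [Matrix.mul_apply]
          rw [Finset.sum_comm]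
          exact Finset.sum_congr rfl fun k _ => by rw [← Finset.sum_mul, hcol k, one_mul]
      _ = ∑ k, ∑ j, adjMatQ H k j := Finset.sum_comm
  rw [← h1, hc, h2]

lemma sumK₃ : ∑ i, ∑ j, adjMatQ K₃ i j = 6 := by
  simp only [adjMatQ_ite]
  simp [Fin.sum_univ_succ]
  rw [show #(Finset.filter (fun x => K₃.Adj 0 x) Finset.univ) = 2 from by decide,
      show #(Finset.filter (fun x => K₃.Adj 1 x) Finset.univ) = 2 from by decide,
      show #(Finset.filter (fun x => K₃.Adj 2 x) Finset.univ) = 2 from by decide]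
  norm_num

lemma sumP₃ : ∑ i, ∑ j, adjMatQ P₃ i j = 4 := by
  simp only [adjMatQ_ite]
  simp [Fin.sum_univ_succ]
  rw [show #(Finset.filter (fun x => P₃.Adj 0 x) Finset.univ) = 1 from by decide,
      show #(Finset.filter (fun x => P₃.Adj 1 x) Finset.univ) = 2 from by decide,
      show #(Finset.filter (fun x => P₃.Adj 2 x) Finset.univ) = 1 from by decide]
  norm_num

lemma card_ST {k : ℕ} (F : SimpleGraph (Fin k)) (n : ℕ) :
    (Nat.card {φ : Fin (n+1) → Fin k // ∀ i, F.Adj (φ i) (φ (i+1))} : ℚ)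
      = Matrix.trace ((adjMatQ F)^(n+1)) := by
  classical
  rw [Nat.card_eq_fintype_card, Fintype.card_subtype]
  rw [← sum_cycProd (adjMatQ F) n]
  rw [← Finset.sum_boole]
  refine Finset.sum_congr rfl fun φ _ => ?_
  simp only [adjMatQ_ite]
  rw [Fintype.prod_boole]
  by_cases h : ∀ i, F.Adj (φ i) (φ (i+1))
  · rw [if_pos h, if_pos h]
  · rw [if_neg h, if_neg h]

variable {W : Type*}

abbrev ST2 (F : SimpleGraph W) (n : ℕ) := {φ : Fin (n+1) → W // ∀ i, F.Adj (φ i) (φ (i+1))}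

noncomputable def e1 (F : SimpleGraph W) : (G₁ →g F) ≃ (ST2 F 4 × ST2 F 4) where
  toFun ψ := (⟨fun i => ψ ⟨i.val, by omega⟩, by
        intro i; apply ψ.map_adj; fin_cases i <;> decide⟩,
      ⟨fun i => ψ ⟨i.val + 5, by omega⟩, by
        intro i; apply ψ.map_adj; fin_cases i <;> decide⟩)
  invFun p := ⟨fun a => if h : a.val < 5 then p.1.1 ⟨a.val, h⟩ else p.2.1 ⟨a.val - 5, by omega⟩, by
    intro a b hab
    fin_cases a <;> fin_cases b <;>
      first
        | exact absurd hab (by decide)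
        | exact p.1.2 0 | exact (p.1.2 0).symm
        | exact p.1.2 1 | exact (p.1.2 1).symm
        | exact p.1.2 2 | exact (p.1.2 2).symm
        | exact p.1.2 3 | exact (p.1.2 3).symm
        | exact p.1.2 4 | exact (p.1.2 4).symm
        | exact p.2.2 0 | exact (p.2.2 0).symm
        | exact p.2.2 1 | exact (p.2.2 1).symm
        | exact p.2.2 2 | exact (p.2.2 2).symm
        | exact p.2.2 3 | exact (p.2.2 3).symm
        | exact p.2.2 4 | exact (p.2.2 4).symm⟩
  left_inv ψ := by
    ext a
    fin_cases a <;> rfl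
  right_inv p := by
    refine Prod.ext (Subtype.ext (funext fun i => ?_)) (Subtype.ext (funext fun i => ?_)) <;>
      fin_cases i <;> rfl

noncomputable def e2 (F : SimpleGraph W) : (G₂ →g F) ≃ (ST2 F 3 × ST2 F 5) where
  toFun ψ := (⟨fun i => ψ ⟨i.val, by omega⟩, by
        intro i; apply ψ.map_adj; fin_cases i <;> decide⟩,
      ⟨fun i => ψ ⟨i.val + 4, by omega⟩, by
        intro i; apply ψ.map_adj; fin_cases i <;> decide⟩)
  invFun p := ⟨fun a => if h : a.val < 4 then p.1.1 ⟨a.val, h⟩ else p.2.1 ⟨a.val - 4, by omega⟩, by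
    intro a b hab
    fin_cases a <;> fin_cases b <;>
      first
        | exact absurd hab (by decide)
        | exact p.1.2 0 | exact (p.1.2 0).symm
        | exact p.1.2 1 | exact (p.1.2 1).symm
        | exact p.1.2 2 | exact (p.1.2 2).symm
        | exact p.1.2 3 | exact (p.1.2 3).symm
        | exact p.2.2 0 | exact (p.2.2 0).symm
        | exact p.2.2 1 | exact (p.2.2 1).symm
        | exact p.2.2 2 | exact (p.2.2 2).symm
        | exact p.2.2 3 | exact (p.2.2 3).symm
        | exact p.2.2 4 | exact (p.2.2 4).symm
        | exact p.2.2 5 | exact (p.2.2 5).symm⟩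
  left_inv ψ := by
    ext a
    fin_cases a <;> rfl
  right_inv p := by
    refine Prod.ext (Subtype.ext (funext fun i => ?_)) (Subtype.ext (funext fun i => ?_)) <;>
      fin_cases i <;> rfl

/-- There is no class `𝓕` of finite simple graphs (non-empty, closed under isomorphism) such that
two graphs are fractionally isomorphic exactly when their right-homomorphism counts into every
member of `𝓕` agree. -/
theorem no_class_captures_fracIso :
    ¬ ∃ 𝓕 : ∀ n : ℕ, Set (SimpleGraph (Fin n)),
      (∃ (n : ℕ) (G : SimpleGraph (Fin n)), G ∈ 𝓕 n) ∧
      (∀ (m n : ℕ) (G : SimpleGraph (Fin m)) (H : SimpleGraph (Fin n)),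
        G ∈ 𝓕 m → Nonempty (G ≃g H) → H ∈ 𝓕 n) ∧
      (∀ (m n : ℕ) (G : SimpleGraph (Fin m)) (H : SimpleGraph (Fin n)),
        FracIso G H ↔
          ∀ (k : ℕ) (F : SimpleGraph (Fin k)), F ∈ 𝓕 k →
            Nat.card (G →g F) = Nat.card (H →g F)) := by
  rintro ⟨𝓕, -, -, hiff⟩
  have hcount := (hiff 10 10 G₁ G₂).1 fraciso_G₁_G₂
  have hedge : ∀ (k : ℕ) (F : SimpleGraph (Fin k)), F ∈ 𝓕 k → ∀ i j, ¬F.Adj i j := by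
    intro k F hF
    apply edgeless_of_cs
    have hc : (Nat.card (G₁ →g F) : ℚ) = (Nat.card (G₂ →g F) : ℚ) := by
      exact_mod_cast congrArg (fun x : ℕ => (x : ℚ)) (hcount k F hF)
    have c1 : (Nat.card (G₁ →g F) : ℚ)
        = Matrix.trace ((adjMatQ F)^5) * Matrix.trace ((adjMatQ F)^5) := by
      rw [Nat.card_congr (e1 F), Nat.card_prod]
      push_cast
      rw [card_ST F 4]
    have c2 : (Nat.card (G₂ →g F) : ℚ)
        = Matrix.trace ((adjMatQ F)^4) * Matrix.trace ((adjMatQ F)^6) := by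
      rw [Nat.card_congr (e2 F), Nat.card_prod]
      push_cast
      rw [card_ST F 3, card_ST F 5]
    rw [c1, c2] at hc
    rw [sq]
    exact hc
  have h3 : FracIso K₃ P₃ := by
    refine (hiff 3 3 K₃ P₃).2 (fun k F hF => ?_)
    have hK : IsEmpty (K₃ →g F) :=
      ⟨fun φ => hedge k F hF _ _ (φ.map_adj (show K₃.Adj 0 1 from by decide))⟩
    have hP : IsEmpty (P₃ →g F) :=
      ⟨fun φ => hedge k F hF _ _ (φ.map_adj (show P₃.Adj 0 1 from by decide))⟩
    rw [Nat.card_of_isEmpty, Nat.card_of_isEmpty]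
  have := fraciso_sum_eq h3
  rw [sumK₃, sumP₃] at this
  norm_num at this
end

section
/- For every n ≥ 3, let Hₙ be the graph obtained from the disjoint union of two copies Aₙ and Bₙ of the clique Kₙ by deleting an edge (a₁,a₂) of Aₙ and an edge (b₁,b₂) of Bₙ and adding the edges (a₁,b₁) and (a₂,b₂). Then for every finite simple graph D, there exists a homomorphism from Hₙ to D if and only if D contains the clique Kₙ₋₁ as a subgraph. -/
open SimpleGraph

/-- `Hₙ`: obtained from the disjoint union of two copies `Aₙ`, `Bₙ` of the clique `Kₙ` by deleting
the edge `(a₁, a₂)` of `Aₙ` and the edge `(b₁, b₂)` of `Bₙ`, and adding the edges `(a₁, b₁)` and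
`(a₂, b₂)`. -/
def twistedDoubleClique (n : ℕ) (hn : 3 ≤ n) : SimpleGraph (Fin n ⊕ Fin n) :=
  let a₁ : Fin n := ⟨0, by omega⟩
  let a₂ : Fin n := ⟨1, by omega⟩
  SimpleGraph.fromRel fun x y =>
    (∃ i j : Fin n, x = Sum.inl i ∧ y = Sum.inl j ∧ ¬(i = a₁ ∧ j = a₂) ∧ ¬(i = a₂ ∧ j = a₁)) ∨
    (∃ i j : Fin n, x = Sum.inr i ∧ y = Sum.inr j ∧ ¬(i = a₁ ∧ j = a₂) ∧ ¬(i = a₂ ∧ j = a₁)) ∨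
    (x = Sum.inl a₁ ∧ y = Sum.inr a₁) ∨
    (x = Sum.inl a₂ ∧ y = Sum.inr a₂)

/-- For `n ≥ 3` and every finite simple graph `D`, there is a homomorphism from `Hₙ` to `D` if and
only if `D` contains the clique `Kₙ₋₁` as a subgraph. -/
theorem hom_from_twistedDoubleClique_iff_clique (n : ℕ) (hn : 3 ≤ n)
    {k : ℕ} (D : SimpleGraph (Fin k)) :
    Nonempty (twistedDoubleClique n hn →g D) ↔ ∃ s : Finset (Fin k), D.IsNClique (n - 1) s := by
  constructor
  · rintro ⟨f⟩
    have hadj : ∀ i j : Fin n, i ≠ j → i.val ≠ 1 → j.val ≠ 1 →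
        (twistedDoubleClique n hn).Adj (Sum.inl i) (Sum.inl j) := by
      intro i j hij hi1 hj1
      simp only [twistedDoubleClique, fromRel_adj]
      refine ⟨by simpa using hij, Or.inl (Or.inl ⟨i, j, rfl, rfl, ?_, ?_⟩)⟩
      · rintro ⟨-, rfl⟩; exact hj1 rfl
      · rintro ⟨rfl, -⟩; exact hi1 rfl
    refine ⟨(Finset.univ.erase (⟨1, by omega⟩ : Fin n)).image (fun i => f (Sum.inl i)), ?_, ?_⟩
    · intro x hx y hy hxy
      simp only [Finset.coe_image, Set.mem_image, Finset.mem_coe, Finset.mem_erase] at hx hy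
      obtain ⟨i, ⟨hi1, -⟩, rfl⟩ := hx
      obtain ⟨j, ⟨hj1, -⟩, rfl⟩ := hy
      have hij : i ≠ j := by rintro rfl; exact hxy rfl
      exact f.map_adj (hadj i j hij (fun h => hi1 (Fin.ext h)) (fun h => hj1 (Fin.ext h)))
    · rw [Finset.card_image_of_injOn, Finset.card_erase_of_mem (Finset.mem_univ _),
        Finset.card_univ, Fintype.card_fin]
      intro i hi j hj hfij
      by_contra hij
      simp only [Finset.coe_erase, Set.mem_diff, Finset.coe_univ, Set.mem_univ,
        Set.mem_singleton_iff, true_and] at hi hj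
      exact (f.map_adj (hadj i j hij (fun h => hi (Fin.ext h)) (fun h => hj (Fin.ext h)))).ne hfij
  · rintro ⟨s, hs, hcard⟩
    have hc : s.card = n - 1 := hcard
    set c : Fin (n - 1) → Fin k := fun i => (s.orderIsoOfFin hc i : Fin k) with hcdef
    have hcinj : Function.Injective c := fun i j h =>
      (s.orderIsoOfFin hc).injective (Subtype.ext h)
    have hcadj : ∀ i j, i ≠ j → D.Adj (c i) (c j) := fun i j hij =>
      hs (s.orderIsoOfFin hc i).2 (s.orderIsoOfFin hc j).2 (fun h => hij (hcinj h))
    set p : Fin n → Fin (n - 1) := fun i =>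
      if i.val ≤ 1 then ⟨0, by omega⟩ else ⟨i.val - 1, by have := i.isLt; omega⟩ with hp
    set q : Fin n → Fin (n - 1) := fun i =>
      if i.val ≤ 1 then ⟨1, by omega⟩ else if i.val = 2 then ⟨0, by omega⟩
        else ⟨i.val - 1, by have := i.isLt; omega⟩ with hq
    have hpinj : ∀ i j : Fin n, i ≠ j → ¬(i.val = 0 ∧ j.val = 1) → ¬(i.val = 1 ∧ j.val = 0) →
        p i ≠ p j := by
      intro i j hij h1 h2 hpe
      simp only [hp] at hpe
      rw [Fin.ne_iff_vne] at hij
      split_ifs at hpe <;> rw [Fin.mk.injEq] at hpe <;> omega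
    have hqinj : ∀ i j : Fin n, i ≠ j → ¬(i.val = 0 ∧ j.val = 1) → ¬(i.val = 1 ∧ j.val = 0) →
        q i ≠ q j := by
      intro i j hij h1 h2 hpe
      simp only [hq] at hpe
      rw [Fin.ne_iff_vne] at hij
      split_ifs at hpe <;> rw [Fin.mk.injEq] at hpe <;> omega
    have hcross : ∀ m : ℕ, (hm : m < n) → m ≤ 1 → p ⟨m, hm⟩ ≠ q ⟨m, hm⟩ := by
      intro m hm hm1
      simp only [hp, hq, hm1, if_pos]
      rw [Fin.ne_iff_vne]
      simp
    refine ⟨⟨Sum.elim (fun i => c (p i)) (fun i => c (q i)), ?_⟩⟩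
    intro x y h
    simp only [twistedDoubleClique, fromRel_adj] at h
    obtain ⟨hne, h⟩ := h
    have hval : ∀ i : Fin n, ∀ m : ℕ, ∀ hm : m < n, i = ⟨m, hm⟩ ↔ i.val = m := by
      intro i m hm; rw [Fin.ext_iff]
    rcases h with (⟨i, j, rfl, rfl, h1, h2⟩ | ⟨i, j, rfl, rfl, h1, h2⟩ | ⟨rfl, rfl⟩ | ⟨rfl, rfl⟩) |
      (⟨i, j, rfl, rfl, h1, h2⟩ | ⟨i, j, rfl, rfl, h1, h2⟩ | ⟨rfl, rfl⟩ | ⟨rfl, rfl⟩)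
    all_goals simp only [Sum.elim_inl, Sum.elim_inr]
    · simp only [hval] at h1 h2
      exact hcadj _ _ (hpinj i j (by simpa using hne) h1 h2)
    · simp only [hval] at h1 h2
      exact hcadj _ _ (hqinj i j (by simpa using hne) h1 h2)
    · exact hcadj _ _ (hcross 0 (by omega) (by omega))
    · exact hcadj _ _ (hcross 1 (by omega) (by omega))
    · simp only [hval] at h1 h2
      exact hcadj _ _ (hpinj j i (by simpa using hne)
        (by rintro ⟨a, b⟩; exact h2 ⟨b, a⟩) (by rintro ⟨a, b⟩; exact h1 ⟨b, a⟩))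
    · simp only [hval] at h1 h2
      exact hcadj _ _ (hqinj j i (by simpa using hne)
        (by rintro ⟨a, b⟩; exact h2 ⟨b, a⟩) (by rintro ⟨a, b⟩; exact h1 ⟨b, a⟩))
    · exact hcadj _ _ (hcross 0 (by omega) (by omega)).symm
    · exact hcadj _ _ (hcross 1 (by omega) (by omega)).symm
end

section
/- There is no class 𝓕 of finite simple graphs (closed under isomorphism) such that for every two graphs G and H: G and H have the same chromatic number if and only if for every graph D ∈ 𝓕, a homomorphism from D to G exists exactly when a homomorphism from D to H exists. -/
open SimpleGraph

/-- Cycle graph on `Fin m` (loopless as long as `2 ≤ m`). -/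
def cyc (m : ℕ) (hm : 2 ≤ m) : SimpleGraph (Fin m) where
  Adj v w := (v.val + 1) % m = w.val ∨ (w.val + 1) % m = v.val
  symm := by constructor; intro v w h; tauto
  loopless := by
    constructor
    intro v h
    have hv := v.isLt
    have h1 : (1 : ℕ) % m = 1 := Nat.mod_eq_of_lt (by omega)
    rcases Nat.lt_or_ge (v.val + 1) m with h' | h'
    · rw [Nat.mod_eq_of_lt h'] at h; omega
    · have hvm : v.val + 1 = m := by omega
      rw [hvm, Nat.mod_self] at h
      have : v.val = 0 := by omega
      rw [this] at hvm; omega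

/-- The natural color function for a 3-coloring of the cycle. -/
def colfun (m a : ℕ) : ℕ := if a = m - 1 then 2 else a % 2

lemma colfun_lt (m a : ℕ) : colfun m a < 3 := by
  unfold colfun; split <;> omega

lemma colfun_step (m a : ℕ) (hm : 2 ≤ m) (ha : a < m) :
    colfun m a ≠ colfun m ((a + 1) % m) := by
  unfold colfun
  rcases eq_or_ne a (m - 1) with h | h
  · have hA : (if a = m - 1 then 2 else a % 2) = 2 := if_pos h
    have hz : (a + 1) % m = 0 := by rw [show a + 1 = m by omega]; exact Nat.mod_self m
    rw [hz, hA, if_neg (show ¬ (0 = m - 1) by omega)]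
    omega
  · have h1 : a + 1 < m := by omega
    rw [Nat.mod_eq_of_lt h1, if_neg h]
    split <;> omega

lemma cyc_adj {m : ℕ} {hm : 2 ≤ m} {v w : Fin m} :
    (cyc m hm).Adj v w ↔ ((v.val + 1) % m = w.val ∨ (w.val + 1) % m = v.val) := Iff.rfl

/-- Explicit value of the "distance from `vv`" function on the cycle. -/
lemma dval (m vv a : ℕ) (hm : 0 < m) (hvv : vv < m) (ha : a < m) :
    (a + (m - vv)) % m = if vv ≤ a then a - vv else a + (m - vv) := by
  split
  · have : a + (m - vv) = (a - vv) + m := by omega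
    rw [this, Nat.add_mod_right, Nat.mod_eq_of_lt (by omega)]
  · exact Nat.mod_eq_of_lt (by omega)

/-- Stepping along the cycle away from the missed vertex `vv` flips parity of distance. -/
lemma dstep (m vv a b : ℕ) (hm : 2 ≤ m) (hvv : vv < m) (ha : a < m) (hb : b < m)
    (hab : (a + 1) % m = b) (hav : a ≠ vv) (hbv : b ≠ vv) :
    ¬ ((a + (m - vv)) % m % 2 = (b + (m - vv)) % m % 2) := by
  have h1 := dval m vv a (by omega) hvv ha
  have h2 := dval m vv b (by omega) hvv hb
  have hb' : b = if a + 1 = m then 0 else a + 1 := by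
    rw [← hab]
    split
    · next h => rw [h, Nat.mod_self]
    · next h => exact Nat.mod_eq_of_lt (by omega)
  rw [h1, h2]
  split_ifs at hb' ⊢ <;> omega

lemma cyc_colorable3 (m : ℕ) (hm : 2 ≤ m) : (cyc m hm).Colorable 3 := by
  refine ⟨Coloring.mk (fun v => ⟨colfun m v.val, colfun_lt m v.val⟩) ?_⟩
  intro v w h hc
  have hc' : colfun m v.val = colfun m w.val := congrArg Fin.val hc
  rcases h with h | h
  · exact colfun_step m v.val hm v.isLt (h ▸ hc')
  · exact colfun_step m w.val hm w.isLt (h ▸ hc'.symm)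

lemma cyc_not_colorable2 (m : ℕ) (hm : 2 ≤ m) (hodd : m % 2 = 1) :
    ¬ (cyc m hm).Colorable 2 := by
  rintro ⟨C⟩
  have hm0 : 0 < m := by omega
  set P : ℕ → ℕ := fun n => (C ⟨n % m, Nat.mod_lt _ hm0⟩).val with hP
  have hstep : ∀ n, P (n + 1) + P n = 1 := by
    intro n
    have hadj : (cyc m hm).Adj ⟨n % m, Nat.mod_lt _ hm0⟩ ⟨(n + 1) % m, Nat.mod_lt _ hm0⟩ :=
      Or.inl (by simp [Nat.mod_add_mod])
    have hne := C.valid hadj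
    have hne' : (C ⟨n % m, Nat.mod_lt _ hm0⟩).val ≠ (C ⟨(n + 1) % m, Nat.mod_lt _ hm0⟩).val :=
      fun hv => hne (Fin.val_injective hv)
    have h1 := (C ⟨n % m, Nat.mod_lt _ hm0⟩).isLt
    have h2 := (C ⟨(n + 1) % m, Nat.mod_lt _ hm0⟩).isLt
    simp only [hP]
    omega
  have hinv : ∀ n, (P n + n) % 2 = P 0 % 2 := by
    intro n
    induction n with
    | zero => rfl
    | succ n ih =>
      have := hstep n
      omega
  have hm' : P m = P 0 := by
    simp only [hP, Nat.mod_self, Nat.zero_mod]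
  have := hinv m
  rw [hm'] at this
  omega

lemma cyc_chromaticNumber (m : ℕ) (hm : 2 ≤ m) (hodd : m % 2 = 1) :
    (cyc m hm).chromaticNumber = 3 := by
  refine le_antisymm ?_ ?_
  · exact_mod_cast (cyc_colorable3 m hm).chromaticNumber_le
  · by_contra hlt
    have h2 : (cyc m hm).chromaticNumber ≤ 2 := by
      have := lt_of_not_ge hlt
      exact Order.le_of_lt_add_one (by exact_mod_cast this)
    rw [show ((2 : ℕ∞)) = ((2 : ℕ) : ℕ∞) by norm_num,
      chromaticNumber_le_iff_colorable] at h2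
    exact cyc_not_colorable2 m hm hodd h2

/-- There is no class `𝓕` of finite simple graphs (non-empty, closed under isomorphism) such that
two graphs have the same chromatic number exactly when, for every `D ∈ 𝓕`, a homomorphism from `D`
to one exists precisely when a homomorphism from `D` to the other exists. -/
theorem no_class_captures_chromatic_number :
    ¬ ∃ 𝓕 : ∀ n : ℕ, Set (SimpleGraph (Fin n)),
      (∃ (n : ℕ) (G : SimpleGraph (Fin n)), G ∈ 𝓕 n) ∧
      (∀ (m n : ℕ) (G : SimpleGraph (Fin m)) (H : SimpleGraph (Fin n)),
        G ∈ 𝓕 m → Nonempty (G ≃g H) → H ∈ 𝓕 n) ∧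
      (∀ (m n : ℕ) (G : SimpleGraph (Fin m)) (H : SimpleGraph (Fin n)),
        G.chromaticNumber = H.chromaticNumber ↔
          ∀ (k : ℕ) (D : SimpleGraph (Fin k)), D ∈ 𝓕 k →
            (Nonempty (D →g G) ↔ Nonempty (D →g H))) := by
  rintro ⟨𝓕, -, -, hiff⟩
  -- χ(K₂) ≠ χ(K₃), so some D ∈ 𝓕 distinguishes them.
  have h23 : (⊤ : SimpleGraph (Fin 2)).chromaticNumber ≠
      (⊤ : SimpleGraph (Fin 3)).chromaticNumber := by
    rw [chromaticNumber_top, chromaticNumber_top]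
    simp
  have hex : ∃ (k : ℕ) (D : SimpleGraph (Fin k)), D ∈ 𝓕 k ∧
      ¬ (Nonempty (D →g (⊤ : SimpleGraph (Fin 2))) ↔
         Nonempty (D →g (⊤ : SimpleGraph (Fin 3)))) := by
    by_contra hno
    push_neg at hno
    exact h23 ((hiff 2 3 ⊤ ⊤).mpr fun k D hD => hno k D hD)
  obtain ⟨k, D, hD, hne⟩ := hex
  -- D is 3-colorable but not 2-colorable.
  have hne' : ¬ (D.Colorable 2 ↔ D.Colorable 3) := hne
  have himp : D.Colorable 2 → D.Colorable 3 := Colorable.mono (by norm_num)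
  have hc3 : D.Colorable 3 := by tauto
  have hnc2 : ¬ D.Colorable 2 := by tauto
  -- The odd cycle of length 2k+3 has the same chromatic number as K₃,
  -- so D must admit a homomorphism into it.
  set m := 2 * k + 3 with hmdef
  have hm : 2 ≤ m := by omega
  have hodd : m % 2 = 1 := by omega
  have hchrom : (⊤ : SimpleGraph (Fin 3)).chromaticNumber =
      (cyc m hm).chromaticNumber := by
    rw [chromaticNumber_top, cyc_chromaticNumber m hm hodd]
    simp
  have hhomcyc : Nonempty (D →g cyc m hm) := by
    have h := ((hiff 3 m ⊤ (cyc m hm)).mp hchrom) k D hD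
    exact h.mp hc3
  obtain ⟨f⟩ := hhomcyc
  -- f is not surjective, so its image misses a vertex v of the cycle.
  have hnsurj : ¬ Function.Surjective f := by
    intro hs
    have := Fintype.card_le_of_surjective f hs
    simp only [Fintype.card_fin] at this
    omega
  have hmiss : ∃ v : Fin m, ∀ a, f a ≠ v := by
    by_contra h
    push_neg at h
    exact hnsurj fun b => h b
  obtain ⟨v, hv⟩ := hmiss
  -- Color each vertex of D by the parity of the cycle-distance of its image from v.
  apply hnc2
  refine ⟨Coloring.mk (fun x => ⟨((f x).val + (m - v.val)) % m % 2, by omega⟩) ?_⟩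
  intro x y hxy hc
  have hc' : ((f x).val + (m - v.val)) % m % 2 = ((f y).val + (m - v.val)) % m % 2 :=
    congrArg Fin.val hc
  have hfadj : (cyc m hm).Adj (f x) (f y) := f.map_adj hxy
  have hxv : (f x).val ≠ v.val := fun h => hv x (Fin.val_injective h)
  have hyv : (f y).val ≠ v.val := fun h => hv y (Fin.val_injective h)
  rcases cyc_adj.mp hfadj with h | h
  · exact dstep m v.val _ _ hm v.isLt (f x).isLt (f y).isLt h hxv hyv hc'
  · exact dstep m v.val _ _ hm v.isLt (f y).isLt (f x).isLt h hyv hxv hc'.symm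
end

section
/- There is no class 𝓕 of finite simple graphs (closed under isomorphism) such that for every two graphs G and H: G and H have the same clique number if and only if for every graph D ∈ 𝓕, a homomorphism from G to D exists exactly when a homomorphism from H to D exists. -/
open SimpleGraph

noncomputable def cliqueNumber {n : ℕ} (G : SimpleGraph (Fin n)) : ℕ :=
  sSup {k : ℕ | ∃ s : Finset (Fin n), G.IsNClique k s}

lemma cliqueNumber_eq {n k : ℕ} (G : SimpleGraph (Fin n)) (s : Finset (Fin n))
    (hs : G.IsNClique k s) (hub : ∀ m, (∃ t, G.IsNClique m t) → m ≤ k) :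
    cliqueNumber G = k :=
  le_antisymm (csSup_le ⟨k, s, hs⟩ (fun m hm => hub m hm))
    (le_csSup ⟨k, fun m hm => hub m hm⟩ ⟨s, hs⟩)

lemma cliqueNumber_top (n : ℕ) : cliqueNumber (⊤ : SimpleGraph (Fin n)) = n := by
  apply cliqueNumber_eq _ Finset.univ
  · constructor
    · intro a _ b _ hab
      exact hab
    · simp
  · rintro m ⟨t, ht⟩
    have := ht.2
    have h2 := Finset.card_le_univ t
    simp at h2
    omega

/-- shift relation on pairs -/
def shiftRel (n : ℕ) (p q : Fin n × Fin n) : Prop :=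
  p.1 < p.2 ∧ q.1 < q.2 ∧ (p.2 = q.1 ∨ q.2 = p.1)

def shiftGraph (n : ℕ) : SimpleGraph (Fin (n * n)) where
  Adj x y := shiftRel n (finProdFinEquiv.symm x) (finProdFinEquiv.symm y)
  symm := by
    constructor
    rintro x y ⟨h1, h2, h3⟩
    exact ⟨h2, h1, h3.symm⟩
  loopless := by
    constructor
    rintro x ⟨h1, h2, h3⟩
    rcases h3 with h | h <;> exact absurd (h ▸ h1) (lt_irrefl _)

lemma shiftGraph_triangle_free (n : ℕ) (x y z : Fin (n * n))
    (hxy : (shiftGraph n).Adj x y) (hyz : (shiftGraph n).Adj y z)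
    (hxz : (shiftGraph n).Adj x z) : False := by
  obtain ⟨a1, a2, a3⟩ := hxy
  obtain ⟨b1, b2, b3⟩ := hyz
  obtain ⟨c1, c2, c3⟩ := hxz
  simp only [Fin.lt_def, Fin.ext_iff] at a1 a2 a3 b1 b2 b3 c1 c2 c3
  omega

lemma shiftGraph_cliqueNumber (n : ℕ) (hn : 3 ≤ n) :
    cliqueNumber (shiftGraph n) = 2 := by
  have h0 : (0 : ℕ) < n := by omega
  have h1 : (1 : ℕ) < n := by omega
  have h2 : (2 : ℕ) < n := by omega
  set v0 : Fin (n * n) := finProdFinEquiv (⟨0, h0⟩, ⟨1, h1⟩) with hv0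
  set v1 : Fin (n * n) := finProdFinEquiv (⟨1, h1⟩, ⟨2, h2⟩) with hv1
  have hne : v0 ≠ v1 := by
    intro h
    have h' := finProdFinEquiv.injective h
    simp [Prod.ext_iff, Fin.ext_iff] at h'
  have hadj : (shiftGraph n).Adj v0 v1 := by
    show shiftRel n _ _
    rw [hv0, hv1]
    simp only [Equiv.symm_apply_apply]
    refine ⟨?_, ?_, Or.inl rfl⟩ <;> simp [Fin.lt_def]
  apply cliqueNumber_eq _ {v0, v1}
  · constructor
    · intro a ha b hb hab
      simp at ha hb
      rcases ha with rfl | rfl <;> rcases hb with rfl | rfl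
      · exact absurd rfl hab
      · exact hadj
      · exact hadj.symm
      · exact absurd rfl hab
    · simp [Finset.card_insert_of_notMem, hne]
  · rintro m ⟨t, ht⟩
    by_contra hm
    push_neg at hm
    have hcm : t.card = m := ht.2
    have h3le : 3 ≤ t.card := by omega
    obtain ⟨x, hx⟩ := Finset.card_pos.mp (by omega : 0 < t.card)
    have hcard2 : 2 ≤ (t.erase x).card := by
      rw [Finset.card_erase_of_mem hx]; omega
    obtain ⟨y, hy⟩ := Finset.card_pos.mp (by omega : 0 < (t.erase x).card)
    have hcard1 : 1 ≤ ((t.erase x).erase y).card := by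
      rw [Finset.card_erase_of_mem hy]; omega
    obtain ⟨z, hz⟩ := Finset.card_pos.mp (by omega : 0 < ((t.erase x).erase y).card)
    have hyx : y ≠ x := (Finset.mem_erase.mp hy).1
    have hym : y ∈ t := (Finset.mem_erase.mp hy).2
    have hzy : z ≠ y := (Finset.mem_erase.mp hz).1
    have hzx : z ≠ x := (Finset.mem_erase.mp (Finset.mem_erase.mp hz).2).1
    have hzm : z ∈ t := (Finset.mem_erase.mp (Finset.mem_erase.mp hz).2).2
    exact shiftGraph_triangle_free n x y z (ht.1 hx hym (Ne.symm hyx))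
      (ht.1 hym hzm (Ne.symm hzy)) (ht.1 hx hzm (Ne.symm hzx))

/-- There is no class `𝓕` of finite simple graphs (non-empty, closed under isomorphism) such that
two graphs have the same clique number exactly when, for every `D ∈ 𝓕`, a homomorphism to `D` from
one exists precisely when a homomorphism to `D` from the other exists. -/
theorem no_class_captures_clique_number :
    ¬ ∃ 𝓕 : ∀ n : ℕ, Set (SimpleGraph (Fin n)),
      (∃ (n : ℕ) (G : SimpleGraph (Fin n)), G ∈ 𝓕 n) ∧
      (∀ (m n : ℕ) (G : SimpleGraph (Fin m)) (H : SimpleGraph (Fin n)),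
        G ∈ 𝓕 m → Nonempty (G ≃g H) → H ∈ 𝓕 n) ∧
      (∀ (m n : ℕ) (G : SimpleGraph (Fin m)) (H : SimpleGraph (Fin n)),
        cliqueNumber G = cliqueNumber H ↔
          ∀ (k : ℕ) (D : SimpleGraph (Fin k)), D ∈ 𝓕 k →
            (Nonempty (G →g D) ↔ Nonempty (H →g D))) := by
  rintro ⟨𝓕, -, -, h⟩
  -- ω(K₂) ≠ ω(K₃), so there is D ∈ 𝓕 distinguishing K₂ and K₃
  have hne : cliqueNumber (⊤ : SimpleGraph (Fin 2)) ≠ cliqueNumber (⊤ : SimpleGraph (Fin 3)) := by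
    rw [cliqueNumber_top, cliqueNumber_top]; omega
  have := (h 2 3 ⊤ ⊤).not.mp hne
  push_neg at this
  obtain ⟨k, D, hD, hiff⟩ := this
  -- hom K₂ → K₃
  have h23 : (⊤ : SimpleGraph (Fin 2)) →g (⊤ : SimpleGraph (Fin 3)) :=
    ⟨Fin.castLE (by omega), by
      intro a b hab
      simp only [top_adj] at *
      exact fun hc => hab (Fin.castLE_injective _ hc)⟩
  have hcase : Nonempty ((⊤ : SimpleGraph (Fin 2)) →g D) := by
    rcases hiff with ⟨hA, _⟩ | ⟨hA, hB⟩
    · exact hA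
    · obtain ⟨ψ⟩ := hB
      exact absurd ⟨ψ.comp h23⟩ (not_nonempty_iff.mpr hA)
  -- set n
  set n : ℕ := 2 ^ k + 3 with hn
  have hn3 : 3 ≤ n := by
    rw [hn]
    have := Nat.one_le_two_pow (n := k)
    omega
  -- shift graph maps to D since its clique number equals that of K₂
  have hsame : cliqueNumber (shiftGraph n) = cliqueNumber (⊤ : SimpleGraph (Fin 2)) := by
    rw [shiftGraph_cliqueNumber n hn3, cliqueNumber_top]
  have hhom := ((h (n * n) 2 (shiftGraph n) ⊤).mp hsame k D hD).mpr hcase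
  obtain ⟨φ⟩ := hhom
  -- injection Fin n ↪ Finset (Fin k)
  set f : Fin n → Finset (Fin k) :=
    fun i => Finset.image (fun j => φ (finProdFinEquiv (i, j)))
      (Finset.univ.filter fun j => i < j) with hf
  have key : ∀ i i' : Fin n, i < i' → f i = f i' → False := by
    intro i i' hlt hfeq
    have hc : φ (finProdFinEquiv (i, i')) ∈ f i := by
      rw [hf]
      simp only [Finset.mem_image, Finset.mem_filter, Finset.mem_univ, true_and]
      exact ⟨i', hlt, rfl⟩
    rw [hfeq, hf] at hc
    simp only [Finset.mem_image, Finset.mem_filter, Finset.mem_univ, true_and] at hc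
    obtain ⟨j, hj, hjc⟩ := hc
    have hadj : (shiftGraph n).Adj (finProdFinEquiv (i, i')) (finProdFinEquiv (i', j)) := by
      show shiftRel n _ _
      simp only [Equiv.symm_apply_apply]
      exact ⟨hlt, hj, Or.inl rfl⟩
    have := φ.map_rel hadj
    rw [hjc] at this
    exact D.loopless.irrefl _ this
  have hinj : Function.Injective f := by
    intro i i' hfi
    rcases lt_trichotomy i i' with hlt | heq | hlt
    · exact absurd hfi (fun hh => key i i' hlt hh)
    · exact heq
    · exact absurd hfi.symm (fun hh => key i' i hlt hh)
  have hcard := Fintype.card_le_of_injective f hinj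
  simp only [Fintype.card_fin, Fintype.card_finset] at hcard
  omega
end
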